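/- arXiv:2005.01447 — 3 statements merged into one kernel-verified Lean document; each statement's English description precedes it below -/
import Mathlib

section
/- For positive integers k, n, s: P_k^{(s)}(x_1,...,x_n) = \sum_{j=1}^{k} (-1)^{j-1} j E_j^{(s)}(x_1,...,x_n) H_{k-j}^{(s)}(x_1,...,x_n). -/
/-- Generating series of the generalized elementary symmetric functions. -/
noncomputable def EgS (s n : ℕ) (x : Fin n → ℂ) : PowerSeries ℂ :=
  ∏ i, ∑ j ∈ Finset.range (s + 1), PowerSeries.C (x i ^ j) * PowerSeries.X ^ j

/-- Generating series of the generalized complete symmetric functions. -/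
noncomputable def HgS (s n : ℕ) (x : Fin n → ℂ) : PowerSeries ℂ :=
  ∏ i, (∑ j ∈ Finset.range (s + 1), PowerSeries.C ((-x i) ^ j) * PowerSeries.X ^ j)⁻¹

/-- `E_k^{(s)}(x₁,…,xₙ)`. -/
noncomputable def Eg (s n : ℕ) (x : Fin n → ℂ) (k : ℕ) : ℂ :=
  PowerSeries.coeff k (EgS s n x)

/-- `H_k^{(s)}(x₁,…,xₙ)`. -/
noncomputable def Hg (s n : ℕ) (x : Fin n → ℂ) (k : ℕ) : ℂ :=
  PowerSeries.coeff k (HgS s n x)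

/-- `P_j^{(s)} = c_j^{(s)} p_j` where `p_j` is the `j`-th power sum and
`c_j^{(s)} = (-1)^j s` if `(s+1) ∣ j`, and `(-1)^(j-1)` otherwise. -/
noncomputable def Pg (s n : ℕ) (x : Fin n → ℂ) (j : ℕ) : ℂ :=
  (if (s + 1) ∣ j then (-1 : ℂ) ^ j * s else (-1 : ℂ) ^ (j - 1)) * ∑ i, x i ^ j

/-!
Write `g(u) = 1 + u + ⋯ + u^s`, so that `∑ E_k t^k = ∏ g(x_i t)` and `∑ H_k t^k = 1 / ∏ g(-x_i t)`.
The right-hand side is then the `k`-th coefficient of `-t G'/G` with `G(t) = ∏ g(-x_i t)`, and the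
logarithmic derivative splits over the factors. Since `g(u) = (1 - u^(s+1)) / (1 - u)`,
`t (d/dt) log g(ct) = ∑_{k ≥ 1} (ct)^k - (s+1) ∑_{(s+1) ∣ k, k ≥ 1} (ct)^k`, whose `k`-th coefficients
at `c = -x_i` add up to `-P_k^{(s)}`.
-/

open PowerSeries Finset

theorem Derivation.sum_mul_prod_of_mul_eq {R A ι : Type*} [CommSemiring R] [CommSemiring A]
    [Algebra R A] (D : Derivation R A A) (e : A) (t : Finset ι) (a f : ι → A)
    (h : ∀ i ∈ t, a i * f i = e * D (f i)) :
    (∑ i ∈ t, a i) * ∏ i ∈ t, f i = e * D (∏ i ∈ t, f i) := by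
  classical
  induction t using Finset.induction_on with
  | empty => simp
  | insert i t hi ih =>
    rw [sum_insert hi, prod_insert hi, D.leibniz, smul_eq_mul, smul_eq_mul, mul_add,
      mul_left_comm e (f i), ← ih fun j hj => h j (mem_insert_of_mem hj), mul_left_comm e,
      ← h i (mem_insert_self i t)]
    ring

namespace PowerSeries

variable {R : Type*} [CommRing R]

theorem coeff_X_mul_derivative (f : R⟦X⟧) (k : ℕ) :
    coeff k (X * d⁄dX R f) = k * coeff k f := by
  rcases k with _ | k
  · simp
  · simp [coeff_succ_X_mul, coeff_derivative, mul_comm]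

theorem coeff_X_mul_derivative_mul (f g : R⟦X⟧) (k : ℕ) :
    coeff k (X * d⁄dX R f * g) = ∑ j ∈ Icc 1 k, j * coeff j f * coeff (k - j) g := by
  rw [coeff_mul, Nat.sum_antidiagonal_eq_sum_range_succ
    (fun i j => coeff i (X * d⁄dX R f) * coeff j g)]
  simp only [coeff_X_mul_derivative]
  refine (sum_subset (fun j hj => ?_) fun j hj hj' => ?_).symm
  · simp only [mem_Icc, mem_range] at hj ⊢
    omega
  · obtain rfl : j = 0 := by simp only [mem_Icc, mem_range] at hj hj'; omega
    simp

noncomputable def truncGeom (s : ℕ) (c : R) : R⟦X⟧ :=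
  ∑ j ∈ range (s + 1), C (c ^ j) * X ^ j

theorem one_sub_mul_truncGeom (s : ℕ) (c : R) :
    (1 - C c * X) * truncGeom s c = 1 - (C c * X) ^ (s + 1) := by
  rw [← mul_neg_geom_sum, truncGeom]
  simp only [mul_pow, map_pow]

theorem coeff_truncGeom (s : ℕ) (c : R) (k : ℕ) :
    coeff k (truncGeom s c) = if k ≤ s then c ^ k else 0 := by
  simp only [truncGeom, map_sum, coeff_C_mul, coeff_X_pow, mul_ite, mul_one, mul_zero,
    sum_ite_eq, mem_range, Nat.lt_succ_iff]

theorem rescale_truncGeom (s : ℕ) (a c : R) :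
    rescale a (truncGeom s c) = truncGeom s (a * c) := by
  ext k
  simp only [coeff_rescale, coeff_truncGeom, mul_pow]
  split_ifs <;> simp

theorem constantCoeff_truncGeom (s : ℕ) (c : R) : constantCoeff (truncGeom s c) = 1 := by
  simp [← coeff_zero_eq_constantCoeff_apply, coeff_truncGeom]

noncomputable def geomTail (m : ℕ) (c : R) : R⟦X⟧ :=
  mk fun k => if k ≠ 0 ∧ m ∣ k then c ^ k else 0

theorem one_sub_pow_mul_geomTail {m : ℕ} (hm : 0 < m) (c : R) :
    (1 - (C c * X) ^ m) * geomTail m c = (C c * X) ^ m := by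
  ext k
  simp only [sub_mul, one_mul, mul_pow, ← map_pow, mul_assoc, map_sub, coeff_C_mul,
    coeff_X_pow_mul', geomTail, coeff_mk]
  rcases lt_or_ge k m with hk | hk
  · have : ¬(k ≠ 0 ∧ m ∣ k) := fun h => (Nat.le_of_dvd (Nat.pos_of_ne_zero h.1) h.2).not_gt hk
    simp [this, hk.not_ge, hk.ne]
  · obtain ⟨d, rfl⟩ := Nat.exists_eq_add_of_le' hk
    rcases d.eq_zero_or_pos with rfl | hd
    · simp [hm.ne']
    · simp [hd.ne', Nat.dvd_add_self_right, pow_add, mul_comm]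

/-- `X g' / g` for `g = truncGeom s c = (1 - (cX)^(s+1)) / (1 - cX)`. -/
noncomputable def truncGeomLogDeriv (s : ℕ) (c : R) : R⟦X⟧ :=
  geomTail 1 c - C ((s : R) + 1) * geomTail (s + 1) c

theorem coeff_truncGeomLogDeriv (s : ℕ) (c : R) {k : ℕ} (hk : k ≠ 0) :
    coeff k (truncGeomLogDeriv s c) = (if (s + 1) ∣ k then -(s : R) else 1) * c ^ k := by
  simp only [truncGeomLogDeriv, geomTail, map_sub, coeff_C_mul, coeff_mk]
  split_ifs <;> simp_all
  ring

theorem truncGeomLogDeriv_mul_truncGeom (s : ℕ) (c : R) :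
    truncGeomLogDeriv s c * truncGeom s c = X * d⁄dX R (truncGeom s c) := by
  set u := C c * X
  set g := truncGeom s c
  have hg := one_sub_mul_truncGeom s c
  have hD : (1 - u) * (X * d⁄dX R g) = u * g - ((s : R⟦X⟧) + 1) * u ^ (s + 1) := by
    have hXd := congrArg (fun f => X * d⁄dX R f) hg
    simp only [Derivation.leibniz, derivative_pow, smul_eq_mul, map_sub, derivative_one,
      derivative_C, derivative_X] at hXd
    push_cast at hXd
    linear_combination hXd
  have h1 := one_sub_pow_mul_geomTail one_pos c
  have h2 := one_sub_pow_mul_geomTail s.add_one_pos c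
  have hw : IsUnit ((1 - u) * (1 - u ^ (s + 1))) := by
    simp [isUnit_iff_constantCoeff, u]
  -- clear the denominators of both geometric tails
  refine hw.mul_left_cancel ?_
  simp only [truncGeomLogDeriv, map_add, map_natCast, map_one, pow_one] at h1 h2 ⊢
  linear_combination (1 - u ^ (s + 1)) * g * h1 - ((s : R⟦X⟧) + 1) * (1 - u) * g * h2
    - (1 - u ^ (s + 1)) * hD - ((s : R⟦X⟧) + 1) * u ^ (s + 1) * hg

end PowerSeries

theorem rescale_neg_one_EgS (s n : ℕ) (x : Fin n → ℂ) :
    rescale (-1) (EgS s n x) = ∏ i, truncGeom s (-x i) := by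
  simp only [EgS, map_prod, ← truncGeom.eq_def, rescale_truncGeom, neg_one_mul]

theorem coeff_prod_truncGeom_neg (s n : ℕ) (x : Fin n → ℂ) (k : ℕ) :
    coeff k (∏ i, truncGeom s (-x i)) = (-1) ^ k * Eg s n x k := by
  rw [← rescale_neg_one_EgS, coeff_rescale, Eg]

theorem prod_truncGeom_neg_mul_HgS (s n : ℕ) (x : Fin n → ℂ) :
    (∏ i, truncGeom s (-x i)) * HgS s n x = 1 := by
  rw [HgS, ← prod_mul_distrib]
  exact prod_eq_one fun i _ =>
    PowerSeries.mul_inv_cancel _ (by rw [constantCoeff_truncGeom]; exact one_ne_zero)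

theorem coeff_sum_truncGeomLogDeriv_neg (s n : ℕ) (x : Fin n → ℂ) {k : ℕ} (hk : k ≠ 0) :
    coeff k (∑ i, truncGeomLogDeriv s (-x i)) = -Pg s n x k := by
  rw [map_sum, Pg, mul_sum, ← sum_neg_distrib]
  refine sum_congr rfl fun i _ => ?_
  rw [coeff_truncGeomLogDeriv s _ hk, neg_pow]
  obtain ⟨k, rfl⟩ := Nat.exists_eq_add_one_of_ne_zero hk
  rw [Nat.add_sub_cancel, pow_succ]
  split_ifs <;> ring

theorem stmt5_general (k n s : ℕ) (hk : 0 < k) (x : Fin n → ℂ) :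
    Pg s n x k =
      ∑ j ∈ Finset.Icc 1 k, (-1 : ℂ) ^ (j - 1) * j * Eg s n x j * Hg s n x (k - j) := by
  set G := ∏ i, truncGeom s (-x i)
  have hlog : (∑ i, truncGeomLogDeriv s (-x i)) * G = X * d⁄dX ℂ G :=
    (d⁄dX ℂ).sum_mul_prod_of_mul_eq X _ _ _ fun i _ => truncGeomLogDeriv_mul_truncGeom s _
  have hsum : ∑ i, truncGeomLogDeriv s (-x i) = X * d⁄dX ℂ G * HgS s n x := by
    rw [← hlog, mul_assoc, prod_truncGeom_neg_mul_HgS, mul_one]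
  have hcoeff := congrArg (coeff k) hsum
  rw [coeff_sum_truncGeomLogDeriv_neg s n x hk.ne', coeff_X_mul_derivative_mul] at hcoeff
  rw [← neg_neg (Pg s n x k), hcoeff, ← sum_neg_distrib]
  refine sum_congr rfl fun j hj => ?_
  obtain ⟨j, rfl⟩ := Nat.exists_eq_add_of_le' (mem_Icc.mp hj).1
  rw [coeff_prod_truncGeom_neg, Hg, Nat.add_sub_cancel, pow_succ]
  ring

theorem stmt5 (k n s : ℕ) (hk : 0 < k) (hn : 0 < n) (hs : 0 < s) (x : Fin n → ℂ) :
    Pg s n x k =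
      ∑ j ∈ Finset.Icc 1 k, (-1 : ℂ) ^ (j - 1) * j * Eg s n x j * Hg s n x (k - j) :=
  stmt5_general k n s hk x
end

section
/- For positive integers k, n, s: E_k^{(s)}(x_1,...,x_n) = (-1)^k \sum_{\lambda \vdash k, \ell(\lambda) \le s} m_{\lambda}(\omega_{1,s+1},...,\omega_{s,s+1}) \, e_{\lambda}(x_1,...,x_n), where \omega_{j,s+1} = e^{2\pi i j/(s+1)}. -/
/-- The elementary symmetric function `e_k(x₁,…,xₙ)`, as the coefficient
of `t^k` in `∏ i (1 + xᵢ t)`. -/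
noncomputable def eg (n : ℕ) (x : Fin n → ℂ) (k : ℕ) : ℂ :=
  PowerSeries.coeff k (∏ i, (1 + PowerSeries.C (x i) * PowerSeries.X))

/-- The evaluation of the monomial symmetric function `m_λ` (for `λ ⊢ k`) at
`m` variables `y₁,…,y_m`: the sum of all distinct monomials `y₁^{a₁} ⋯ y_m^{a_m}`
whose multiset of nonzero exponents equals the multiset of parts of `λ`. -/
noncomputable def msym (m : ℕ) (y : Fin m → ℂ) (k : ℕ) (lam : Nat.Partition k) : ℂ :=
  ∑ f ∈ Finset.filter
      (fun f : Fin m → ℕ => Multiset.filter (fun a => a ≠ 0) (Finset.univ.val.map f) = lam.parts)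
      (Fintype.piFinset fun _ => Finset.range (k + 1)),
    ∏ i, y i ^ f i

/-- `λ`-indexed product of elementary symmetric functions `e_λ = ∏ e_{λᵢ}`. -/
noncomputable def eprod (n : ℕ) (x : Fin n → ℂ) (k : ℕ) (lam : Nat.Partition k) : ℂ :=
  (lam.parts.map (eg n x)).prod

/-!
Since `1 + t + ⋯ + t^s = ∏_{j=1}^{s} (1 - ω_j t)` for the nontrivial `(s+1)`-st roots of unity
`ω_j`, the generating series `∏ᵢ (1 + xᵢt + ⋯ + (xᵢt)^s)` of the `E_k^{(s)}` equals
`∏_j E(-ω_j t)`, where `E(t) = ∏ᵢ (1 + xᵢ t) = ∑ e_k t^k`. Its `t^k` coefficient is a sum over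
exponent vectors `l ∈ ℕ^s` with `|l| = k` of `(-1)^k ∏_j ω_j^{l_j} e_{l_j}`; grouping the vectors
`l` by the partition formed by their nonzero entries turns this into `(-1)^k ∑_λ m_λ(ω) e_λ`.
-/

open Finset

open Polynomial in
theorem IsPrimitiveRoot.prod_range_one_sub_pow_mul {R : Type*} [CommRing R] [IsDomain R]
    {ζ : R} {n : ℕ} (h : IsPrimitiveRoot ζ n) (hn : 0 < n) (y : R) :
    ∏ j ∈ range n, (1 - ζ ^ j * y) = 1 - y ^ n := by
  classical
  have himage : nthRootsFinset n (1 : R) = (range n).image (ζ ^ ·) := by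
    rw [nthRootsFinset_def, h.nthRoots_eq (one_pow n)]
    simp [Finset.image, Multiset.range]
  rw [← one_pow n, h.pow_sub_pow_eq_prod_sub_mul 1 y hn, one_pow, himage,
    prod_image fun i hi j hj hij => h.pow_inj (mem_range.1 hi) (mem_range.1 hj) hij]

theorem IsPrimitiveRoot.geom_sum_eq_prod_range_one_sub_mul {R : Type*} [CommRing R] [IsDomain R]
    {ζ : R} {s : ℕ} (h : IsPrimitiveRoot ζ (s + 1)) {y : R} (hy : y ≠ 1) :
    ∑ m ∈ range (s + 1), y ^ m = ∏ j ∈ range s, (1 - ζ ^ (j + 1) * y) := by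
  refine mul_left_cancel₀ (sub_ne_zero.2 hy.symm) ?_
  rw [mul_neg_geom_sum, ← h.prod_range_one_sub_pow_mul s.succ_pos, prod_range_succ', pow_zero,
    one_mul, mul_comm]

namespace PowerSeries

theorem rescale_one_add_C_mul_X {R : Type*} [CommSemiring R] (a c : R) :
    rescale a (1 + C c * X) = 1 + C (a * c) * X := by
  ext (_ | _ | n) <;> simp only [coeff_rescale] <;> simp [coeff_one]

theorem coeff_prod_rescale {ι R : Type*} [Fintype ι] [DecidableEq ι] [CommSemiring R]
    (a : ι → R) (f : PowerSeries R) (k : ℕ) :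
    coeff k (∏ j, rescale (a j) f) =
      ∑ l ∈ finsuppAntidiag univ k, ∏ j, a j ^ l j * coeff (l j) f := by
  simp only [coeff_prod, coeff_rescale]

end PowerSeries

theorem Multiset.prod_map_filter_ne_zero {M : Type*} [CommMonoid M] {g : ℕ → M} (hg : g 0 = 1)
    (m : Multiset ℕ) : ((m.filter (· ≠ 0)).map g).prod = (m.map g).prod := by
  induction m using Multiset.induction_on with
  | empty => simp
  | cons a m ih => by_cases ha : a = 0 <;> simp [ha, hg, ih]

theorem Multiset.sum_filter_ne_zero (m : Multiset ℕ) : (m.filter (· ≠ 0)).sum = m.sum :=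
  (Nat.Partition.ofSums _ m rfl).parts_sum

theorem Finset.sum_finsuppAntidiag_eq_sum_piAntidiag {ι M : Type*} [DecidableEq ι]
    [AddCommMonoid M] (s : Finset ι) (n : ℕ) (F : (ι → ℕ) → M) :
    ∑ l ∈ finsuppAntidiag s n, F l = ∑ f ∈ piAntidiag s n, F f := by
  rw [finsuppAntidiag, sum_map, ← sum_attach (piAntidiag s n)]
  rfl

theorem sum_partitions_sum_fiber_eq_sum_piAntidiag {M : Type*} [AddCommMonoid M] (s k : ℕ)
    (F : (Fin s → ℕ) → M) :
    ∑ lam ∈ univ.filter (fun lam : Nat.Partition k => Multiset.card lam.parts ≤ s),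
      ∑ f ∈ (Fintype.piFinset fun _ => range (k + 1)).filter
          (fun f : Fin s → ℕ => Multiset.filter (fun a => a ≠ 0) (univ.val.map f) = lam.parts),
        F f =
      ∑ f ∈ piAntidiag univ k, F f := by
  rw [← sum_biUnion]
  · congr 1
    ext f
    simp only [mem_biUnion, mem_filter, mem_univ, true_and, Fintype.mem_piFinset, mem_range,
      mem_piAntidiag, ne_eq, imp_true_iff, and_true]
    constructor
    · rintro ⟨lam, -, -, hf⟩
      rw [← lam.parts_sum, ← hf, Multiset.sum_filter_ne_zero]
      rfl
    · intro hf
      refine ⟨Nat.Partition.ofSums k (univ.val.map f) hf, ?_, fun j => ?_, rfl⟩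
      · calc _ ≤ Multiset.card (univ.val.map f) := Multiset.card_le_card (Multiset.filter_le _ _)
          _ = s := by simp
      · exact Nat.lt_succ_of_le (hf ▸ single_le_sum (fun i _ => Nat.zero_le (f i)) (mem_univ j))
  · intro lam _ mu _ hne
    refine disjoint_left.2 fun f hlam hmu => hne (Nat.Partition.ext ?_)
    rw [← (mem_filter.1 hlam).2, ← (mem_filter.1 hmu).2]

theorem sum_msym_mul_prod_map (s k : ℕ) (y : Fin s → ℂ) {g : ℕ → ℂ} (hg : g 0 = 1) :
    ∑ lam ∈ univ.filter (fun lam : Nat.Partition k => Multiset.card lam.parts ≤ s),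
      msym s y k lam * (lam.parts.map g).prod =
      ∑ l ∈ finsuppAntidiag univ k, ∏ j, y j ^ l j * g (l j) := by
  rw [sum_finsuppAntidiag_eq_sum_piAntidiag univ k fun f => ∏ j, y j ^ f j * g (f j),
    ← sum_partitions_sum_fiber_eq_sum_piAntidiag]
  refine sum_congr rfl fun lam _ => ?_
  rw [msym, sum_mul]
  refine sum_congr rfl fun f hf => ?_
  rw [← (mem_filter.1 hf).2, Multiset.prod_map_filter_ne_zero hg, Multiset.map_map,
    prod_mul_distrib]
  rfl

open PowerSeries in
theorem EgS_eq_rescale_prod_rescale (s n : ℕ) (x : Fin n → ℂ) {ζ : ℂ}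
    (h : IsPrimitiveRoot ζ (s + 1)) :
    EgS s n x =
      rescale (-1) (∏ j : Fin s, rescale (ζ ^ (j.val + 1)) (∏ i, (1 + C (x i) * X))) := by
  simp only [EgS, map_prod]
  rw [prod_comm]
  refine prod_congr rfl fun i _ => ?_
  have hC : IsPrimitiveRoot (C ζ) (s + 1) := h.map_of_injective C_injective
  have hy : C (x i) * X ≠ 1 := fun h1 => by simpa using congrArg constantCoeff h1
  calc ∑ m ∈ range (s + 1), C (x i ^ m) * X ^ m = ∑ m ∈ range (s + 1), (C (x i) * X) ^ m := by
        simp only [mul_pow, map_pow]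
    _ = ∏ j ∈ range s, (1 - C ζ ^ (j + 1) * (C (x i) * X)) :=
        hC.geom_sum_eq_prod_range_one_sub_mul hy
    _ = _ := by
      rw [← Fin.prod_univ_eq_prod_range]
      refine prod_congr rfl fun j _ => ?_
      rw [rescale_one_add_C_mul_X, rescale_one_add_C_mul_X]
      simp only [map_mul, map_neg, map_one, map_pow]
      ring

theorem stmt10_general (k n s : ℕ) (x : Fin n → ℂ) :
    Eg s n x k =
      (-1 : ℂ) ^ k *
        ∑ lam ∈ Finset.filter (fun lam : Nat.Partition k => Multiset.card lam.parts ≤ s)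
            Finset.univ,
          msym s (fun j => Complex.exp (2 * Real.pi * Complex.I * (j.val + 1) / (s + 1))) k lam *
            eprod n x k lam := by
  set ζ : ℂ := Complex.exp (2 * Real.pi * Complex.I / (s + 1))
  have hζ : IsPrimitiveRoot ζ (s + 1) := by
    simpa using Complex.isPrimitiveRoot_exp (s + 1) s.succ_ne_zero
  have hω : (fun j : Fin s => Complex.exp (2 * Real.pi * Complex.I * (j.val + 1) / (s + 1))) =
      fun j => ζ ^ (j.val + 1) := by
    funext j
    rw [← Complex.exp_nat_mul]
    push_cast
    ring_nf
  have he : eg n x 0 = 1 := by simp [eg, PowerSeries.coeff_zero_eq_constantCoeff, map_prod]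
  rw [Eg, EgS_eq_rescale_prod_rescale s n x hζ, PowerSeries.coeff_rescale,
    PowerSeries.coeff_prod_rescale, hω]
  exact congrArg _ (sum_msym_mul_prod_map s k _ he).symm

theorem stmt10 (k n s : ℕ) (hk : 0 < k) (hn : 0 < n) (hs : 0 < s) (x : Fin n → ℂ) :
    Eg s n x k =
      (-1 : ℂ) ^ k *
        ∑ lam ∈ Finset.filter (fun lam : Nat.Partition k => Multiset.card lam.parts ≤ s)
            Finset.univ,
          msym s (fun j => Complex.exp (2 * Real.pi * Complex.I * (j.val + 1) / (s + 1))) k lam *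
            eprod n x k lam :=
  stmt10_general k n s x
end

section
/- For positive integers k, n, s: E_k^{(s-1)}(x_1,...,x_n) = \sum_{j=0}^{\lfloor k/s \rfloor} (-1)^j e_j(x_1^s,...,x_n^s) \, h_{k-sj}(x_1,...,x_n). -/
/-- The complete homogeneous symmetric function `h_k(x₁,…,xₙ)`. -/
noncomputable def hg (n : ℕ) (x : Fin n → ℂ) (k : ℕ) : ℂ :=
  PowerSeries.coeff k (∏ i, (1 - PowerSeries.C (x i) * PowerSeries.X)⁻¹)

namespace PowerSeries

open Finset

theorem coeff_expand_mul_eq_sum {R : Type*} [CommRing R] (s : ℕ) (hs : s ≠ 0) (F G : R⟦X⟧)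
    (k : ℕ) :
    coeff k (expand s hs F * G) = ∑ j ∈ range (k / s + 1), coeff j F * coeff (k - s * j) G := by
  have hinj : Set.InjOn (s * ·) (range (k / s + 1) : Set ℕ) :=
    fun _ _ _ _ h => Nat.eq_of_mul_eq_mul_left (Nat.pos_of_ne_zero hs) h
  rw [coeff_mul, Nat.sum_antidiagonal_eq_sum_range_succ
    (fun i j => coeff i (expand s hs F) * coeff j G)]
  have hsparse : ∑ j ∈ range (k / s + 1), coeff j F * coeff (k - s * j) G =
      ∑ i ∈ (range (k / s + 1)).image (s * ·), coeff i (expand s hs F) * coeff (k - i) G := by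
    rw [sum_image hinj]
    simp only [coeff_expand_mul]
  rw [hsparse]
  refine (sum_subset ?_ fun i hik hi => ?_).symm
  · simp only [subset_iff, mem_image, mem_range]
    rintro _ ⟨j, hj, rfl⟩
    have := Nat.mul_div_le k s
    have := Nat.mul_le_mul_left s (Nat.lt_succ_iff.mp hj)
    omega
  · obtain ⟨j, rfl⟩ | hndvd := em (s ∣ i)
    · refine absurd (mem_image_of_mem _ (mem_range.mpr ?_)) hi
      rw [Nat.lt_succ_iff, Nat.le_div_iff_mul_le (Nat.pos_of_ne_zero hs), mul_comm]
      exact Nat.lt_succ_iff.mp (mem_range.mp hik)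
    · rw [coeff_expand_of_not_dvd s hs F hndvd, zero_mul]

theorem sum_range_C_pow_mul_X_pow {K : Type*} [Field K] (y : K) (s : ℕ) :
    ∑ j ∈ range s, C (y ^ j) * X ^ j = (1 - C (y ^ s) * X ^ s) * (1 - C y * X)⁻¹ := by
  have hunit : (1 - C y * X) * (1 - C y * X)⁻¹ = 1 := PowerSeries.mul_inv_cancel _ (by simp)
  have hgeom := geom_sum_mul_neg (C y * X) s
  simp only [map_pow, mul_pow] at hgeom ⊢
  rw [← hgeom, mul_assoc, hunit, mul_one]

theorem rescale_C {R : Type*} [CommSemiring R] (a r : R) : rescale a (C r) = C r := by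
  ext n
  rcases n with _ | n <;> simp [coeff_rescale, coeff_C]

end PowerSeries

theorem stmt12_general (k n s : ℕ) (hs : 0 < s) (x : Fin n → ℂ) :
    Eg (s - 1) n x k =
      ∑ j ∈ Finset.range (k / s + 1),
        (-1 : ℂ) ^ j * eg n (fun i => x i ^ s) j * hg n x (k - s * j) := by
  open PowerSeries in
  have hfactor : EgS (s - 1) n x = expand s hs.ne' (rescale (-1) (∏ i, (1 + C (x i ^ s) * X)))
      * ∏ i, (1 - C (x i) * X)⁻¹ := by
    simp_rw [EgS, Nat.sub_add_cancel hs, sum_range_C_pow_mul_X_pow, Finset.prod_mul_distrib,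
      map_prod]
    congr 1
    refine Finset.prod_congr rfl fun i _ => ?_
    simp only [map_add, map_one, map_mul, map_neg, rescale_C, rescale_X, expand_C, expand_X]
    ring
  rw [Eg, hfactor, PowerSeries.coeff_expand_mul_eq_sum]
  refine Finset.sum_congr rfl fun j _ => ?_
  rw [PowerSeries.coeff_rescale, eg, hg]

/-- `E_k^{(s-1)}(x₁,…,xₙ) = ∑_{j=0}^{⌊k/s⌋} (-1)^j e_j(x₁^s,…,xₙ^s) h_{k-sj}(x₁,…,xₙ)`. -/
theorem stmt12 (k n s : ℕ) (hk : 0 < k) (hn : 0 < n) (hs : 0 < s) (x : Fin n → ℂ) :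
    Eg (s - 1) n x k =
      ∑ j ∈ Finset.range (k / s + 1),
        (-1 : ℂ) ^ j * eg n (fun i => x i ^ s) j * hg n x (k - s * j) :=
  stmt12_general k n s hs x
end
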